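/- Let G be a 3-connected multigraph, let u, v, w be three pairwise adjacent vertices of G each of which has at least four distinct neighbours in G, and let G' be obtained from G by a Δ-YY transformation on u, v, w. Then G' is 3-connected. -/

import Mathlib

open scoped Classical

noncomputable section

/-- A multigraph: a finite vertex type together with a symmetric multiplicity
function recording the size of the connection (set of parallel edges) between
any two vertices; there are no loops. -/
structure MG : Type 1 where
  V : Type
  fin : Fintype V
  mult : V → V → ℕ
  symm : ∀ u v, mult u v = mult v u
  loopless : ∀ v, mult v v = 0

namespace MG

/-- Two vertices are adjacent when their connection is non-empty. -/
def Adj (G : MG) (u v : G.V) : Prop := 0 < G.mult u v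

/-- Connection size as a function on unordered pairs of vertices. -/
def multS (G : MG) : Sym2 G.V → ℕ := Sym2.lift ⟨G.mult, G.symm⟩

/-- Number of vertices. -/
def order (G : MG) : ℕ := @Fintype.card G.V G.fin

/-- Degree of a vertex, counting edges with multiplicity. -/
def deg (G : MG) (v : G.V) : ℕ :=
  haveI := G.fin
  ∑ u, G.mult v u

/-- `G` is `k`-regular. -/
def Regular (G : MG) (k : ℕ) : Prop := ∀ v, G.deg v = k

/-- A simple graph: every connection has size at most 1. -/
def Simple (G : MG) : Prop := ∀ u v, G.mult u v ≤ 1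

/-- Isomorphism of multigraphs. -/
def Iso (G H : MG) : Prop :=
  ∃ e : G.V ≃ H.V, ∀ u v, H.mult (e u) (e v) = G.mult u v

/-- Indicator: is `{a,b}` one of the three pairs `{u,v}, {u,w}, {v,w}`? -/
def triCount {V : Type} (u v w a b : V) : ℕ :=
  if s(a, b) ∈ ({s(u, v), s(u, w), s(v, w)} : Set (Sym2 V)) then 1 else 0

lemma triCount_symm {V : Type} (u v w a b : V) :
    triCount u v w a b = triCount u v w b a := by
  unfold triCount
  have h : s(a, b) = s(b, a) := Sym2.eq_swap
  rw [h]

/-- `u, v, w` form a delta (triangle): pairwise distinct and pairwise adjacent. -/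
def IsDelta (G : MG) (u v w : G.V) : Prop :=
  u ≠ v ∧ u ≠ w ∧ v ≠ w ∧ G.Adj u v ∧ G.Adj u w ∧ G.Adj v w

/-- `x` is the centre of a wye with external vertices `u, v, w`: the edges
incident to `x` are exactly two parallel edges to each of `u, v, w`. -/
def IsWye (G : MG) (x u v w : G.V) : Prop :=
  u ≠ v ∧ u ≠ w ∧ v ≠ w ∧ x ≠ u ∧ x ≠ v ∧ x ≠ w ∧
    G.mult x u = 2 ∧ G.mult x v = 2 ∧ G.mult x w = 2 ∧
    ∀ y : G.V, y ≠ u → y ≠ v → y ≠ w → G.mult x y = 0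

/-- Multiplicity function of the result of a Δ-YY transformation on the
delta `u, v, w`; the new vertex `x` is `none`. -/
def deltaMult (G : MG) (u v w : G.V) : Option G.V → Option G.V → ℕ
  | none, none => 0
  | none, some b => if b = u ∨ b = v ∨ b = w then 2 else 0
  | some a, none => if a = u ∨ a = v ∨ a = w then 2 else 0
  | some a, some b => G.mult a b - triCount u v w a b

/-- The result of the Δ-YY transformation on the delta `u, v, w`: one edge of
each of the connections `uv`, `uw`, `vw` is removed, a new vertex (`none`) is
added, joined by two parallel edges to each of `u, v, w`. -/
def deltaYY (G : MG) (u v w : G.V) : MG where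
  V := Option G.V
  fin := by haveI := G.fin; infer_instance
  mult := G.deltaMult u v w
  symm := by
    rintro (_ | a) (_ | b)
    · rfl
    · rfl
    · rfl
    · show G.mult a b - triCount u v w a b = G.mult b a - triCount u v w b a
      rw [G.symm a b, triCount_symm]
  loopless := by
    rintro (_ | a)
    · rfl
    · show G.mult a a - triCount u v w a a = 0
      rw [G.loopless]
      exact Nat.zero_sub _

/-- The result of the YY-Δ transformation on a wye with centre `x` and external
vertices `u, v, w`: the vertex `x` is deleted together with all its incident
edges, and one new edge is added to each of the connections `uv`, `uw`, `vw`. -/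
def yyDelta (G : MG) (x u v w : G.V) : MG where
  V := {y : G.V // y ≠ x}
  fin := by haveI := G.fin; infer_instance
  mult a b := if a = b then 0 else G.mult a.1 b.1 + triCount u v w a.1 b.1
  symm := by
    intro a b
    rcases eq_or_ne a b with h | h
    · subst h; rfl
    · rw [if_neg h, if_neg h.symm, G.symm a.1 b.1, triCount_symm]
  loopless := fun a => if_pos rfl

/-- `G'` is obtained from `G` by a Δ-YY transformation. -/
def DeltaYYStep (G G' : MG) : Prop :=
  ∃ u v w : G.V, G.IsDelta u v w ∧ Iso (G.deltaYY u v w) G'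

/-- `G'` is obtained from `G` by a YY-Δ transformation. -/
def YYDeltaStep (G G' : MG) : Prop :=
  ∃ x u v w : G.V, G.IsWye x u v w ∧ Iso (G.yyDelta x u v w) G'

/-- `G'` is obtained from `G` by a Δ-YY operation (either a Δ-YY transformation
or a YY-Δ transformation). -/
def Step (G G' : MG) : Prop := DeltaYYStep G G' ∨ YYDeltaStep G G'

/-- Δ-YY equivalence: `G` can be transformed into `H`, up to isomorphism, by a
finite sequence of Δ-YY operations. -/
def DYYEquiv : MG → MG → Prop :=
  Relation.EqvGen (fun G G' => Step G G' ∨ Iso G G')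

/-- The Δ-YY equivalence class of `G` contains only finitely many isomorphism
classes of multigraphs. -/
def FiniteClass (G : MG) : Prop :=
  ∃ S : Finset MG, ∀ H : MG, DYYEquiv G H → ∃ H' ∈ S, Iso H H'

/-- Connectivity: nonempty, and any two vertices are joined by a path. -/
def Connected (G : MG) : Prop :=
  Nonempty G.V ∧ ∀ u v : G.V, Relation.ReflTransGen G.Adj u v

/-- The multigraph obtained by deleting a set of vertices (and all edges
incident to them). -/
def deleteVerts (G : MG) (S : Set G.V) : MG where
  V := {y : G.V // y ∉ S}
  fin := by haveI := G.fin; infer_instance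
  mult a b := G.mult a.1 b.1
  symm := fun a b => G.symm a.1 b.1
  loopless := fun a => G.loopless a.1

/-- `G` is `k`-connected: it has more than `k` vertices and deleting any set of
fewer than `k` vertices leaves a connected multigraph. -/
def KConnected (G : MG) (k : ℕ) : Prop :=
  k < G.order ∧ ∀ S : Set G.V, S.ncard < k → (G.deleteVerts S).Connected

/-- `G` is planar: it has a drawing in the plane in which vertices are distinct
points, every edge (each parallel edge separately) is a continuous injective
arc joining the points of its endpoints, no arc passes through a vertex point
in its interior, and the interiors of the arcs of distinct edges are disjoint.
The arc of the `k`-th edge from `v` to `u` is the reverse of the arc of the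
`k`-th edge from `u` to `v` (they are the same edge drawn once). -/
def IsPlanar (G : MG) : Prop :=
  ∃ (pos : G.V → ℝ × ℝ) (γ : G.V → G.V → ℕ → C(unitInterval, ℝ × ℝ)),
    Function.Injective pos ∧
    (∀ u v k, k < G.mult u v →
      γ u v k 0 = pos u ∧ γ u v k 1 = pos v ∧ Function.Injective (γ u v k)) ∧
    (∀ u v k (t : unitInterval), γ v u k t = γ u v k (unitInterval.symm t)) ∧
    (∀ u v k, k < G.mult u v → ∀ t : unitInterval, t ≠ 0 → t ≠ 1 →
      ∀ z : G.V, γ u v k t ≠ pos z) ∧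
    (∀ u v k u' v' k', k < G.mult u v → k' < G.mult u' v' →
      (s(u, v) ≠ s(u', v') ∨ k ≠ k') →
      ∀ t t' : unitInterval, t ≠ 0 → t ≠ 1 → t' ≠ 0 → t' ≠ 1 →
        γ u v k t ≠ γ u' v' k' t')

/-- An independent set: no two of its vertices are adjacent. -/
def IsIndepSet (G : MG) (S : Set G.V) : Prop :=
  ∀ u ∈ S, ∀ v ∈ S, ¬ G.Adj u v

/-- The independence number `α(G)`: the maximum size of an independent set. -/
def indepNum (G : MG) : ℕ :=
  sSup {n | ∃ S : Set G.V, G.IsIndepSet S ∧ S.ncard = n}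

/-- The number of non-empty connections, i.e. the number of edges of the
simplification `G^S`. -/
def numConn (G : MG) : ℕ := {p : Sym2 G.V | G.multS p ≠ 0}.ncard

/-- The cyclomatic number `m - n + 1` of the simplification `G^S` of `G`. -/
def cyclomaticS (G : MG) : ℤ := (G.numConn : ℤ) - (G.order : ℤ) + 1

/-- `AddOnAt G a S` : the vertex set `S` of `G` carries (a subgraph copy of) an
add-on whose addition vertex is `a`.  An add-on of length 0 is a double edge or
a delta; an add-on of length `n ≥ 1` is a 4-cycle `a b c d` with the
connections `ab`, `ad` of size 1 and `bc`, `cd` of size 2, glued at `c` to an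
add-on of length `n - 1`. -/
inductive AddOnAt (G : MG) : G.V → Set G.V → Prop
  | double (a b : G.V) : a ≠ b → 2 ≤ G.mult a b → AddOnAt G a {a, b}
  | delta (a b c : G.V) : a ≠ b → a ≠ c → b ≠ c →
      1 ≤ G.mult a b → 1 ≤ G.mult a c → 1 ≤ G.mult b c → AddOnAt G a {a, b, c}
  | link (a b c d : G.V) (S : Set G.V) :
      a ≠ b → a ≠ c → a ≠ d → b ≠ c → b ≠ d → c ≠ d →
      1 ≤ G.mult a b → 1 ≤ G.mult a d → 2 ≤ G.mult b c → 2 ≤ G.mult c d →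
      AddOnAt G c S → S ∩ {a, b, d} = ∅ → AddOnAt G a ({a, b, d} ∪ S)

/-- `G` contains one of the four families of excluded subgraphs. -/
def HasExcluded (G : MG) : Prop :=
  -- (1) a 3-cycle in which at least one connection has size at least 2
  (∃ a b c : G.V, a ≠ b ∧ a ≠ c ∧ b ≠ c ∧
      2 ≤ G.mult a b ∧ 1 ≤ G.mult a c ∧ 1 ≤ G.mult b c) ∨
  -- (2) a 4-cycle with at least three connections of size at least 2 and an
  -- add-on glued at a vertex incident to two of them
  (∃ a b c d : G.V, ∃ S : Set G.V,
      a ≠ b ∧ a ≠ c ∧ a ≠ d ∧ b ≠ c ∧ b ≠ d ∧ c ≠ d ∧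
      2 ≤ G.mult a b ∧ 2 ≤ G.mult b c ∧ 2 ≤ G.mult c d ∧ 1 ≤ G.mult d a ∧
      AddOnAt G b S ∧ S ∩ {a, c, d} = ∅) ∨
  -- (3) a 5-cycle with all connections of size at least 2 and add-ons glued at
  -- two non-adjacent vertices of the cycle
  (∃ v₀ v₁ v₂ v₃ v₄ : G.V, ∃ S T : Set G.V,
      v₀ ≠ v₁ ∧ v₀ ≠ v₂ ∧ v₀ ≠ v₃ ∧ v₀ ≠ v₄ ∧ v₁ ≠ v₂ ∧ v₁ ≠ v₃ ∧ v₁ ≠ v₄ ∧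
      v₂ ≠ v₃ ∧ v₂ ≠ v₄ ∧ v₃ ≠ v₄ ∧
      2 ≤ G.mult v₀ v₁ ∧ 2 ≤ G.mult v₁ v₂ ∧ 2 ≤ G.mult v₂ v₃ ∧
      2 ≤ G.mult v₃ v₄ ∧ 2 ≤ G.mult v₄ v₀ ∧
      AddOnAt G v₀ S ∧ AddOnAt G v₂ T ∧
      S ∩ {v₁, v₂, v₃, v₄} = ∅ ∧ T ∩ {v₀, v₁, v₃, v₄} = ∅ ∧ S ∩ T = ∅) ∨
  -- (4) a 4-cycle with three connections of size at least 2, whose fourth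
  -- connection has size 1 and lies in a triangle, with add-ons glued at both
  -- vertices of that connection
  (∃ a b c d e : G.V, ∃ S T : Set G.V,
      a ≠ b ∧ a ≠ c ∧ a ≠ d ∧ a ≠ e ∧ b ≠ c ∧ b ≠ d ∧ b ≠ e ∧
      c ≠ d ∧ c ≠ e ∧ d ≠ e ∧
      2 ≤ G.mult a b ∧ 2 ≤ G.mult b c ∧ 2 ≤ G.mult c d ∧ G.mult d a = 1 ∧
      1 ≤ G.mult d e ∧ 1 ≤ G.mult e a ∧
      AddOnAt G a S ∧ AddOnAt G d T ∧
      S ∩ {b, c, d, e} = ∅ ∧ T ∩ {a, b, c, e} = ∅ ∧ S ∩ T = ∅)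

/-- The doubling of a simple graph: every edge is replaced by a connection of
size 2. -/
def doubling {V : Type} [Fintype V] (H : SimpleGraph V) : MG where
  V := V
  fin := inferInstance
  mult u v := if H.Adj u v then 2 else 0
  symm := by
    intro u v
    by_cases h : H.Adj u v
    · rw [if_pos h, if_pos h.symm]
    · rw [if_neg h, if_neg fun h' => h h'.symm]
  loopless := fun v => if_neg (H.loopless.irrefl v)

end MG

end


/-!
Only connections inside the delta `{u, v, w}` lose an edge, and a lost edge `ab` is replaced by the
path `a x b` through the new vertex `x`. Hence if `x` survives the deletion of at most two
vertices, so does every walk of `G` avoiding them. If `x` is deleted, at most one further vertex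
`s` is; every surviving vertex is joined to a surviving delta vertex, and any two surviving delta
vertices `t, t'` are joined: otherwise one of their components, say that of `t`, meets the delta
only in `t`. A neighbour `y ∉ {u, v, w, s}` of `t` (there are four neighbours) is joined to `t'`
in `G - {s, t}`, and this walk can leave the component of `t` only along a lost edge, whose ends
both lie in the delta.
-/

theorem Set.ncard_preimage_some {α : Type*} (S : Set (Option α)) :
    (Option.some ⁻¹' S).ncard = (S \ {none}).ncard := by
  rw [← Set.ncard_preimage_of_injective_subset_range (Option.some_injective α)]
  · congr 1
    ext a
    simp
  · rintro (_ | a) h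
    exacts [absurd rfl h.2, ⟨a, rfl⟩]

theorem Set.ncard_triple_le {α : Type*} (a b c : α) : ({a, b, c} : Set α).ncard ≤ 3 :=
  (Set.ncard_insert_le _ _).trans <| Nat.succ_le_succ <|
    (Set.ncard_insert_le _ _).trans (by rw [Set.ncard_singleton])

theorem Set.subsingleton_or_subsingleton_of_disjoint {α : Type*} [Finite α] {T A B : Set α}
    (hT : T.ncard ≤ 3) (hA : A ⊆ T) (hB : B ⊆ T) (h : Disjoint A B) :
    A.Subsingleton ∨ B.Subsingleton := by
  by_contra! hAB
  have hA₂ := Set.one_lt_ncard_iff_nontrivial.mpr hAB.1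
  have hB₂ := Set.one_lt_ncard_iff_nontrivial.mpr hAB.2
  have := Set.ncard_le_ncard (Set.union_subset hA hB)
  rw [Set.ncard_union_eq h] at this
  omega

namespace MG

variable {G H : MG}

theorem Adj.symm {a b : G.V} (h : G.Adj a b) : G.Adj b a := by
  rwa [Adj, G.symm]

theorem Adj.ne {a b : G.V} (h : G.Adj a b) : a ≠ b := by
  rintro rfl
  exact h.ne' (G.loopless a)

/-- `a` and `b` are joined by a walk in `G` none of whose vertices lies in `S`; the trivial walk
counts even when `a ∈ S`. -/
def ReachAvoiding (G : MG) (S : Set G.V) : G.V → G.V → Prop :=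
  Relation.ReflTransGen fun a b => a ∉ S ∧ b ∉ S ∧ G.Adj a b

namespace ReachAvoiding

variable {S : Set G.V} {a b c : G.V}

theorem refl : G.ReachAvoiding S a a :=
  Relation.ReflTransGen.refl

theorem single (ha : a ∉ S) (hb : b ∉ S) (h : G.Adj a b) : G.ReachAvoiding S a b :=
  Relation.ReflTransGen.single ⟨ha, hb, h⟩

theorem trans (hab : G.ReachAvoiding S a b) (hbc : G.ReachAvoiding S b c) :
    G.ReachAvoiding S a c :=
  Relation.ReflTransGen.trans hab hbc

theorem tail (hab : G.ReachAvoiding S a b) (hb : b ∉ S) (hc : c ∉ S) (h : G.Adj b c) :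
    G.ReachAvoiding S a c :=
  hab.trans (single hb hc h)

theorem symm (h : G.ReachAvoiding S a b) : G.ReachAvoiding S b a :=
  Relation.ReflTransGen.mono (fun _ _ ⟨hx, hy, hxy⟩ => ⟨hy, hx, hxy.symm⟩) _ _
    (Relation.ReflTransGen.swap _ _ h)

@[elab_as_elim]
theorem invariant {P : G.V → Prop}
    (hP : ∀ p q, p ∉ S → q ∉ S → G.Adj p q → P p → P q)
    (h : G.ReachAvoiding S a b) (ha : P a) : P b := by
  induction h with
  | refl => exact ha
  | tail _ hpq ih => exact hP _ _ hpq.1 hpq.2.1 hpq.2.2 ih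

end ReachAvoiding

theorem connected_deleteVerts_iff {S : Set G.V} :
    (G.deleteVerts S).Connected ↔
      (∃ a, a ∉ S) ∧ ∀ a b, a ∉ S → b ∉ S → G.ReachAvoiding S a b := by
  constructor
  · rintro ⟨⟨a⟩, hpath⟩
    refine ⟨⟨a.1, a.2⟩, fun a b ha hb => ?_⟩
    exact Relation.ReflTransGen.lift Subtype.val (fun p q h => ⟨p.2, q.2, h⟩) _ _
      (hpath ⟨a, ha⟩ ⟨b, hb⟩)
  · rintro ⟨⟨a, ha⟩, hreach⟩
    refine ⟨⟨⟨a, ha⟩⟩, fun p q => ?_⟩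
    refine (hreach p.1 q.1 p.2 q.2).invariant
      (P := fun r => ∀ hr : r ∉ S, Relation.ReflTransGen (G.deleteVerts S).Adj p ⟨r, hr⟩)
      (fun r s hr hs hrs hp _ => (hp hr).tail hrs) (fun _ => Relation.ReflTransGen.refl) q.2

theorem KConnected.reachAvoiding {k : ℕ} (hG : G.KConnected k) {S : Set G.V}
    (hS : S.ncard < k) {a b : G.V} (ha : a ∉ S) (hb : b ∉ S) : G.ReachAvoiding S a b :=
  (connected_deleteVerts_iff.mp (hG.2 S hS)).2 a b ha hb

theorem KConnected.of_iso {k : ℕ} (hG : G.KConnected k) (h : G.Iso H) : H.KConnected k := by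
  obtain ⟨e, he⟩ := h
  have horder : H.order = G.order := by
    let := G.fin; let := H.fin
    exact (Fintype.card_congr e).symm
  refine ⟨horder ▸ hG.1, fun S hS => connected_deleteVerts_iff.mpr ?_⟩
  have hS' : (e ⁻¹' S).ncard < k := by
    rwa [Set.ncard_preimage_of_injective_subset_range e.injective (by simp)]
  obtain ⟨⟨a, ha⟩, hreach⟩ := connected_deleteVerts_iff.mp (hG.2 _ hS')
  refine ⟨⟨e a, ha⟩, fun a b ha hb => ?_⟩
  have hab := hreach (e.symm a) (e.symm b) (by simpa using ha) (by simpa using hb)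
  simpa using hab.invariant (P := fun r => H.ReachAvoiding S a (e r))
    (fun p q hp hq hpq hr => hr.tail hp hq (by rwa [Adj, he])) (by simpa using .refl)

section DeltaYY

variable {u v w : G.V}

theorem mem_of_triCount_ne_zero {V : Type} {u v w a b : V} (h : triCount u v w a b ≠ 0) :
    a ∈ ({u, v, w} : Set V) ∧ b ∈ ({u, v, w} : Set V) := by
  unfold triCount at h
  split_ifs at h with hmem
  · simp only [Set.mem_insert_iff, Set.mem_singleton_iff, Sym2.eq_iff] at hmem ⊢
    tauto
  · exact absurd rfl h

theorem adj_deltaYY_some_or {a b : G.V} (h : G.Adj a b) :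
    (G.deltaYY u v w).Adj (some a) (some b) ∨
      a ∈ ({u, v, w} : Set G.V) ∧ b ∈ ({u, v, w} : Set G.V) := by
  by_cases ht : triCount u v w a b = 0
  · left
    show 0 < G.mult a b - triCount u v w a b
    rwa [ht, Nat.sub_zero]
  · exact .inr (mem_of_triCount_ne_zero ht)

theorem adj_deltaYY_none {a : G.V} (h : a ∈ ({u, v, w} : Set G.V)) :
    (G.deltaYY u v w).Adj none (some a) := by
  show 0 < if a = u ∨ a = v ∨ a = w then 2 else 0
  rw [if_pos (by simpa using h)]
  exact two_pos

theorem order_deltaYY : (G.deltaYY u v w).order = G.order + 1 := by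
  let := G.fin
  exact Fintype.card_option

variable {S : Set (Option G.V)}

theorem exists_reachAvoiding_deltaYY_from_delta (hG : G.KConnected 3)
    (hS : (Option.some ⁻¹' S).ncard < 3) {t₀ : G.V} (ht₀ : t₀ ∈ ({u, v, w} : Set G.V))
    (ht₀S : some t₀ ∉ S) {a : G.V} (ha : some a ∉ S) :
    ∃ t ∈ ({u, v, w} : Set G.V), some t ∉ S ∧
      (G.deltaYY u v w).ReachAvoiding S (some t) (some a) := by
  refine (hG.reachAvoiding hS ht₀S ha).invariant ?_ ⟨t₀, ht₀, ht₀S, .refl⟩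
  rintro p q hp hq hpq ⟨t, ht, htS, hr⟩
  rcases adj_deltaYY_some_or hpq with h | ⟨-, hqT⟩
  exacts [⟨t, ht, htS, hr.tail hp hq h⟩, ⟨q, hqT, hq, .refl⟩]

theorem reachAvoiding_deltaYY_of_subsingleton (hG : G.KConnected 3)
    (hdeg : ∀ t ∈ ({u, v, w} : Set G.V), 4 ≤ {y | G.Adj t y}.ncard)
    (hS : (Option.some ⁻¹' S).ncard ≤ 1) {t : G.V} (ht : t ∈ ({u, v, w} : Set G.V))
    (htS : some t ∉ S)
    (hsub : {r ∈ ({u, v, w} : Set G.V) |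
      (G.deltaYY u v w).ReachAvoiding S (some t) (some r)}.Subsingleton)
    {b : G.V} (hb : some b ∉ S) : (G.deltaYY u v w).ReachAvoiding S (some t) (some b) := by
  let := G.fin
  obtain ⟨y, hy, hyE⟩ := Set.exists_mem_notMem_of_ncard_lt_ncard
    (s := ({u, v, w} \ {t} : Set G.V) ∪ Option.some ⁻¹' S) (t := {y | G.Adj t y}) <| by
    have := Set.ncard_union_le ({u, v, w} \ {t} : Set G.V) (Option.some ⁻¹' S)
    have := Set.ncard_triple_le u v w
    rw [Set.ncard_sdiff_singleton_of_mem ht] at *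
    have := hdeg t ht
    omega
  have hyt : y ≠ t := (Adj.ne hy).symm
  have hyS : some y ∉ S := fun h => hyE (.inr h)
  have hty : (G.deltaYY u v w).ReachAvoiding S (some t) (some y) :=
    .single htS hyS <| (adj_deltaYY_some_or hy).resolve_right fun h => hyE (.inl ⟨h.2, hyt⟩)
  rcases eq_or_ne b t with rfl | hbt
  · exact .refl
  have hwalk := hG.reachAvoiding (S := Option.some ⁻¹' S ∪ {t})
    ((Set.ncard_union_le _ _).trans_lt (by rw [Set.ncard_singleton]; omega))
    (not_or.mpr ⟨hyS, hyt⟩) (not_or.mpr ⟨hb, hbt⟩)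
  refine hwalk.invariant (fun p q hp hq hpq hr => ?_) hty
  obtain ⟨hpS, hpt⟩ := not_or.mp hp
  rcases adj_deltaYY_some_or hpq with h | ⟨hpT, -⟩
  · exact hr.tail hpS (not_or.mp hq).1 h
  · exact absurd (hsub ⟨hpT, hr⟩ ⟨ht, .refl⟩) hpt

theorem reachAvoiding_deltaYY_delta (hG : G.KConnected 3)
    (hdeg : ∀ t ∈ ({u, v, w} : Set G.V), 4 ≤ {y | G.Adj t y}.ncard)
    (hS : (Option.some ⁻¹' S).ncard ≤ 1) {t t' : G.V}
    (ht : t ∈ ({u, v, w} : Set G.V)) (htS : some t ∉ S)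
    (ht' : t' ∈ ({u, v, w} : Set G.V)) (ht'S : some t' ∉ S) :
    (G.deltaYY u v w).ReachAvoiding S (some t) (some t') := by
  let := G.fin
  by_contra h
  have hdisj : Disjoint
      {r ∈ ({u, v, w} : Set G.V) | (G.deltaYY u v w).ReachAvoiding S (some t) (some r)}
      {r ∈ ({u, v, w} : Set G.V) | (G.deltaYY u v w).ReachAvoiding S (some t') (some r)} :=
    Set.disjoint_left.mpr fun _ hr hr' => h (hr.2.trans hr'.2.symm)
  rcases Set.subsingleton_or_subsingleton_of_disjoint (Set.ncard_triple_le u v w)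
    (Set.sep_subset _ _) (Set.sep_subset _ _) hdisj with hsub | hsub
  · exact h (reachAvoiding_deltaYY_of_subsingleton hG hdeg hS ht htS hsub ht'S)
  · exact h (reachAvoiding_deltaYY_of_subsingleton hG hdeg hS ht' ht'S hsub htS).symm

theorem connected_deleteVerts_deltaYY_of_none_mem (hG : G.KConnected 3)
    (hT : ({u, v, w} : Set G.V).ncard = 3)
    (hdeg : ∀ t ∈ ({u, v, w} : Set G.V), 4 ≤ {y | G.Adj t y}.ncard)
    (hS : S.ncard < 3) (hnone : none ∈ S) : ((G.deltaYY u v w).deleteVerts S).Connected := by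
  let := G.fin
  have hS₀ : (Option.some ⁻¹' S).ncard ≤ 1 := by
    rw [Set.ncard_preimage_some, Set.ncard_sdiff_singleton_of_mem hnone]
    omega
  obtain ⟨t₀, ht₀, ht₀S⟩ := Set.exists_mem_notMem_of_ncard_lt_ncard
    (s := Option.some ⁻¹' S) (t := ({u, v, w} : Set G.V)) (by omega)
  have hreach : ∀ a, a ∉ S → (G.deltaYY u v w).ReachAvoiding S (some t₀) a := by
    rintro (_ | a) ha
    · exact absurd hnone ha
    obtain ⟨t, ht, htS, hta⟩ :=
      exists_reachAvoiding_deltaYY_from_delta hG (hS₀.trans_lt (by norm_num)) ht₀ ht₀S ha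
    exact (reachAvoiding_deltaYY_delta hG hdeg hS₀ ht₀ ht₀S ht htS).trans hta
  exact connected_deleteVerts_iff.mpr
    ⟨⟨_, ht₀S⟩, fun a b ha hb => (hreach a ha).symm.trans (hreach b hb)⟩

theorem connected_deleteVerts_deltaYY_of_none_notMem (hG : G.KConnected 3)
    (hT : ({u, v, w} : Set G.V).ncard = 3) (hS : S.ncard < 3) (hnone : none ∉ S) :
    ((G.deltaYY u v w).deleteVerts S).Connected := by
  let := G.fin
  have hS₀ : (Option.some ⁻¹' S).ncard < 3 := by
    rw [Set.ncard_preimage_some]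
    exact (Set.ncard_sdiff_singleton_le _ _).trans_lt hS
  -- a walk of `G` survives, with a detour through the new vertex at each deleted edge
  have hlift : ∀ a b, some a ∉ S → some b ∉ S →
      (G.deltaYY u v w).ReachAvoiding S (some a) (some b) := by
    intro a b ha hb
    refine (hG.reachAvoiding hS₀ ha hb).invariant (fun p q hp hq hpq hr => ?_) .refl
    rcases adj_deltaYY_some_or hpq with h | ⟨hpT, hqT⟩
    · exact hr.tail hp hq h
    · exact (hr.tail hp hnone (adj_deltaYY_none hpT).symm).tail hnone hq (adj_deltaYY_none hqT)
  obtain ⟨t, ht, htS⟩ := Set.exists_mem_notMem_of_ncard_lt_ncard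
    (s := Option.some ⁻¹' S) (t := ({u, v, w} : Set G.V)) (by omega)
  have hreach : ∀ a, a ∉ S → (G.deltaYY u v w).ReachAvoiding S none a := by
    rintro (_ | a) ha
    · exact .refl
    · exact ((ReachAvoiding.single hnone htS (adj_deltaYY_none ht) :
        (G.deltaYY u v w).ReachAvoiding S _ _)).trans (hlift t a htS ha)
  exact connected_deleteVerts_iff.mpr
    ⟨⟨_, hnone⟩, fun a b ha hb => (hreach a ha).symm.trans (hreach b hb)⟩

theorem KConnected.deltaYY (hG : G.KConnected 3) (hT : ({u, v, w} : Set G.V).ncard = 3)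
    (hdeg : ∀ t ∈ ({u, v, w} : Set G.V), 4 ≤ {y | G.Adj t y}.ncard) :
    (G.deltaYY u v w).KConnected 3 := by
  refine ⟨by rw [order_deltaYY]; exact hG.1.trans (Nat.lt_succ_self _), fun S hS => ?_⟩
  by_cases hnone : none ∈ S
  · exact connected_deleteVerts_deltaYY_of_none_mem hG hT hdeg hS hnone
  · exact connected_deleteVerts_deltaYY_of_none_notMem hG hT hS hnone

end DeltaYY

end MG

/-- If `G` is a 3-connected multigraph, `u, v, w` are three pairwise
adjacent vertices each having at least four distinct neighbours, and `G'` is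
obtained from `G` by the Δ-YY transformation on `u, v, w`, then `G'` is
3-connected. -/
theorem stmt_6 (G G' : MG) (hG : G.KConnected 3) (u v w : G.V)
    (hd : G.IsDelta u v w)
    (hu : 4 ≤ {y : G.V | G.Adj u y}.ncard)
    (hv : 4 ≤ {y : G.V | G.Adj v y}.ncard)
    (hw : 4 ≤ {y : G.V | G.Adj w y}.ncard)
    (hiso : MG.Iso (G.deltaYY u v w) G') : G'.KConnected 3 := by
  obtain ⟨huv, huw, hvw, -⟩ := hd
  have hT : ({u, v, w} : Set G.V).ncard = 3 :=
    Set.ncard_eq_three.mpr ⟨u, v, w, huv, huw, hvw, rfl⟩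
  refine (hG.deltaYY hT ?_).of_iso hiso
  rintro t (rfl | rfl | rfl) <;> assumption
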